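/- arXiv:2405.14087 — 2 statements merged into one kernel-verified Lean document; each statement's English description precedes it below -/
import Mathlib

section
/- Let V be a nonempty subset of ℝ^n and let g be a tropical rational function with g ≥ 0 and g(x) = 0 for all x in the closure of V. Then there exists a positive integer N such that N · dist(x, closure(V)) ≥ g(x) for all x ∈ ℝ^n. -/
/-- A tropical (max-plus) polynomial function on `ℝ^n` (Euclidean space). -/
def IsTropPoly (n : ℕ) (f : EuclideanSpace ℝ (Fin n) → ℝ) : Prop :=
  ∃ (A : Finset (Fin n → ℕ)) (hA : A.Nonempty) (a : (Fin n → ℕ) → ℝ),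
    ∀ x, f x = A.sup' hA fun i => a i + ∑ j, (i j : ℝ) * x j

/-- A tropical rational function is a difference of two tropical polynomial functions. -/
def IsTropRat (n : ℕ) (f : EuclideanSpace ℝ (Fin n) → ℝ) : Prop :=
  ∃ f₁ f₂, IsTropPoly n f₁ ∧ IsTropPoly n f₂ ∧ ∀ x, f x = f₁ x - f₂ x

lemma coord_abs_le_dist {n : ℕ} (x y : EuclideanSpace ℝ (Fin n)) (j : Fin n) :
    |x j - y j| ≤ dist x y := by
  have h := EuclideanSpace.dist_eq x y
  rw [h]
  have h1 : |x j - y j| = Real.sqrt (dist (x j) (y j) ^ 2) := by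
    rw [Real.dist_eq, Real.sqrt_sq_eq_abs, abs_abs]
  rw [h1]
  apply Real.sqrt_le_sqrt
  exact Finset.single_le_sum (f := fun i => dist (x i) (y i) ^ 2)
    (fun i _ => sq_nonneg _) (Finset.mem_univ j)

lemma troppoly_lip {n : ℕ} (f : EuclideanSpace ℝ (Fin n) → ℝ) (hf : IsTropPoly n f) :
    ∃ L : ℝ, 0 ≤ L ∧ ∀ x y, f x - f y ≤ L * dist x y := by
  obtain ⟨A, hA, a, hfa⟩ := hf
  set L := A.sup' hA (fun i => ∑ j, (i j : ℝ)) with hL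
  refine ⟨L, ?_, ?_⟩
  · obtain ⟨i, hi⟩ := hA
    exact le_trans (Finset.sum_nonneg fun j _ => Nat.cast_nonneg _)
      (Finset.le_sup' (fun i => ∑ j, (i j : ℝ)) hi)
  · intro x y
    rw [sub_le_iff_le_add, hfa x]
    apply Finset.sup'_le
    intro i hi
    have h1 : a i + ∑ j, (i j : ℝ) * x j
        = (a i + ∑ j, (i j : ℝ) * y j) + ∑ j, (i j : ℝ) * (x j - y j) := by
      have hs : ∑ j, (i j : ℝ) * (x j - y j)
          = (∑ j, (i j : ℝ) * x j) - ∑ j, (i j : ℝ) * y j := by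
        rw [← Finset.sum_sub_distrib]
        exact Finset.sum_congr rfl fun j _ => by ring
      rw [hs]; ring
    rw [h1]
    have h2 : a i + ∑ j, (i j : ℝ) * y j ≤ f y := by
      rw [hfa y]
      exact Finset.le_sup' (fun i => a i + ∑ j, (i j : ℝ) * y j) hi
    have h3 : ∑ j, (i j : ℝ) * (x j - y j) ≤ L * dist x y := by
      calc ∑ j, (i j : ℝ) * (x j - y j)
          ≤ ∑ j, (i j : ℝ) * dist x y := by
            apply Finset.sum_le_sum
            intro j _
            calc (i j : ℝ) * (x j - y j) ≤ (i j : ℝ) * |x j - y j| :=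
                  mul_le_mul_of_nonneg_left (le_abs_self _) (Nat.cast_nonneg _)
              _ ≤ (i j : ℝ) * dist x y :=
                  mul_le_mul_of_nonneg_left (coord_abs_le_dist x y j) (Nat.cast_nonneg _)
        _ = (∑ j, (i j : ℝ)) * dist x y := by rw [Finset.sum_mul]
        _ ≤ L * dist x y :=
            mul_le_mul_of_nonneg_right
              (Finset.le_sup' (fun i => ∑ j, (i j : ℝ)) hi) dist_nonneg
    linarith

/-- If `V ⊆ ℝ^n` is nonempty and `g` is a tropical rational function
with `g ≥ 0` vanishing on the closure of `V`, then there is a positive integer `N`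
with `g x ≤ N * dist(x, closure V)` for all `x`. -/
theorem stmt11 (n : ℕ) (V : Set (EuclideanSpace ℝ (Fin n))) (hV : V.Nonempty)
    (g : EuclideanSpace ℝ (Fin n) → ℝ) (hg : IsTropRat n g)
    (hg0 : ∀ x, 0 ≤ g x) (hgV : ∀ x ∈ closure V, g x = 0) :
    ∃ N : ℕ, 0 < N ∧ ∀ x, g x ≤ (N : ℝ) * Metric.infDist x (closure V) := by
  obtain ⟨f₁, f₂, hf₁, hf₂, hgf⟩ := hg
  obtain ⟨L₁, hL₁, h₁⟩ := troppoly_lip f₁ hf₁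
  obtain ⟨L₂, hL₂, h₂⟩ := troppoly_lip f₂ hf₂
  refine ⟨⌈L₁ + L₂⌉₊ + 1, Nat.succ_pos _, fun x => ?_⟩
  have hN : L₁ + L₂ ≤ ((⌈L₁ + L₂⌉₊ + 1 : ℕ) : ℝ) := by
    push_cast
    linarith [Nat.le_ceil (L₁ + L₂)]
  set N : ℝ := ((⌈L₁ + L₂⌉₊ + 1 : ℕ) : ℝ)
  have hNnn : 0 ≤ N := by positivity
  -- g x ≤ N * dist x y for all y ∈ closure V
  have key : ∀ y ∈ closure V, g x ≤ N * dist x y := by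
    intro y hy
    have hgy : g y = 0 := hgV y hy
    have : g x - g y ≤ (L₁ + L₂) * dist x y := by
      rw [hgf x, hgf y]
      have := h₁ x y
      have := h₂ y x
      rw [dist_comm y x] at this
      nlinarith
    have hd : (L₁ + L₂) * dist x y ≤ N * dist x y :=
      mul_le_mul_of_nonneg_right hN dist_nonneg
    linarith
  have hne : (closure V).Nonempty := hV.closure
  rcases eq_or_lt_of_le hNnn with hN0 | hN0
  · obtain ⟨y, hy⟩ := hne
    have := key y hy
    rw [← hN0] at this ⊢
    simpa using this
  · rw [mul_comm, ← div_le_iff₀ hN0]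
    by_contra h
    push_neg at h
    obtain ⟨y, hy, hdy⟩ := (Metric.infDist_lt_iff hne).mp h
    have := key y hy
    have : N * dist x y < N * (g x / N) := by
      exact mul_lt_mul_of_pos_left hdy hN0
    rw [mul_div_cancel₀ _ (ne_of_gt hN0)] at this
    linarith
end

section
/- Let V be a nonempty subset of ℝ^n and suppose f is a tropical rational function such that (1) { x ∈ ℝ^n | f(x) = 0 } equals the closure of V, and (2) there exists k' ∈ ℤ>0 with k'·f(x) ≥ dist(x, closure(V)) for all x. Then for any tropical rational function g with g ≥ 0 and g vanishing on closure(V), there exists N' ∈ ℤ>0 with N'·f ≥ g pointwise, and the congruence E(closure(V)) of all pairs agreeing on closure(V) equals ⟨(f, 0)⟩. -/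
/-- The nonzero (≠ -∞) elements of the tropical rational function semifield. -/
abbrev TRF (n : ℕ) := { f : EuclideanSpace ℝ (Fin n) → ℝ // IsTropRat n f }

/-- The tropical rational function semifield: tropical rational functions with `⊥ = -∞`. -/
abbrev TR (n : ℕ) := WithBot (TRF n)

/-- Evaluation of an element of the semifield at a point, with values in `ℝ ∪ {-∞}`. -/
def evalTR {n : ℕ} (a : TR n) (x : EuclideanSpace ℝ (Fin n)) : WithBot ℝ :=
  WithBot.map (fun f => f.1 x) a

/-- `add` realizes tropical addition `⊕` (pointwise max, with `-∞` neutral). -/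
def AddLaw (n : ℕ) (add : TR n → TR n → TR n) : Prop :=
  (∀ f g : TRF n, ∃ h : TRF n, add ↑f ↑g = ↑h ∧ ∀ x, h.1 x = max (f.1 x) (g.1 x)) ∧
  (∀ a, add a ⊥ = a) ∧ (∀ a, add ⊥ a = a)

/-- `mul` realizes tropical multiplication `⊙` (pointwise sum, with `-∞` absorbing). -/
def MulLaw (n : ℕ) (mul : TR n → TR n → TR n) : Prop :=
  (∀ f g : TRF n, ∃ h : TRF n, mul ↑f ↑g = ↑h ∧ ∀ x, h.1 x = f.1 x + g.1 x) ∧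
  (∀ a, mul a ⊥ = ⊥) ∧ (∀ a, mul ⊥ a = ⊥)

/-- A congruence: an equivalence relation compatible with both operations. -/
def IsCongruence {α : Type*} (add mul : α → α → α) (E : α → α → Prop) : Prop :=
  (∀ a, E a a) ∧ (∀ a b, E a b → E b a) ∧ (∀ a b c, E a b → E b c → E a c) ∧
  (∀ a b c d, E a b → E c d → E (add a c) (add b d)) ∧
  (∀ a b c d, E a b → E c d → E (mul a c) (mul b d))

/-- The congruence generated by a relation `R`. -/
def conGenBy {α : Type*} (add mul : α → α → α) (R : α → α → Prop) : α → α → Prop :=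
  fun a b => ∀ E : α → α → Prop, IsCongruence add mul E → (∀ x y, R x y → E x y) → E a b

/-!
Tropical rational functions are Lipschitz, so a tropical rational `g` vanishing on `closure V`
satisfies `g x ≤ K · dist(x, closure V) ≤ K k' · f x`.

For the congruence, let `p`, `q` agree on `closure V` and put `m = p ⊕ q`. The bound above,
applied to `m - p`, gives `p ≤ m ≤ N·f + p`. In a congruence containing `(f, 0)` we have
`f^{⊙N} ⊙ p ∼ p`, and since `f^{⊙N} ⊙ p ⊕ m = f^{⊙N} ⊙ p` and `p ⊕ m = m`, also `p ∼ m`.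
Likewise `q ∼ m`.
-/

open Metric
open scoped NNReal

lemma IsTropPoly.exists_lipschitzWith {n : ℕ} {f : EuclideanSpace ℝ (Fin n) → ℝ}
    (hf : IsTropPoly n f) : ∃ K, LipschitzWith K f := by
  obtain ⟨A, hA, a, hfA⟩ := hf
  obtain rfl : f = A.sup' hA fun i x => a i + ∑ j, (i j : ℝ) * x j :=
    funext fun x => by rw [hfA, Finset.sup'_apply]
  refine Finset.sup'_induction hA _ (p := fun g => ∃ K, LipschitzWith K g)
    (fun _ ⟨K₁, h₁⟩ _ ⟨K₂, h₂⟩ => ⟨max K₁ K₂, h₁.max h₂⟩) fun i _ => ?_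
  let L : StrongDual ℝ (EuclideanSpace ℝ (Fin n)) := ∑ j, (i j : ℝ) • EuclideanSpace.proj j
  have hL : (fun x : EuclideanSpace ℝ (Fin n) => a i + ∑ j, (i j : ℝ) * x j) =
      fun x => a i + L x := by
    ext x
    simp [L]
  exact ⟨0 + ‖L‖₊, hL ▸ (LipschitzWith.const (a i)).add L.lipschitz⟩

lemma IsTropRat.exists_lipschitzWith {n : ℕ} {f : EuclideanSpace ℝ (Fin n) → ℝ}
    (hf : IsTropRat n f) : ∃ K, LipschitzWith K f := by
  obtain ⟨f₁, f₂, hf₁, hf₂, hf⟩ := hf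
  obtain ⟨K₁, h₁⟩ := hf₁.exists_lipschitzWith
  obtain ⟨K₂, h₂⟩ := hf₂.exists_lipschitzWith
  exact ⟨K₁ + K₂, funext hf ▸ h₁.sub h₂⟩

lemma LipschitzWith.le_mul_infDist {α : Type*} [PseudoMetricSpace α] {w : α → ℝ} {K : ℝ≥0}
    (hw : LipschitzWith K w) {s : Set α} (hs : s.Nonempty) (hw0 : ∀ y ∈ s, w y = 0) (x : α) :
    w x ≤ K * infDist x s := by
  have : Nonempty s := hs.to_subtype
  rw [infDist_eq_iInf, Real.mul_iInf_of_nonneg K.coe_nonneg]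
  exact le_ciInf fun y => by simpa [hw0 y y.2] using hw.le_add_mul x y

lemma exists_nat_le_mul_of_infDist_le {α : Type*} [PseudoMetricSpace α] {s : Set α}
    (hs : s.Nonempty) {f w : α → ℝ} {k : ℕ} (hk : 0 < k) (hf : ∀ x, infDist x s ≤ k * f x)
    {K : ℝ≥0} (hw : LipschitzWith K w) (hw0 : ∀ y ∈ s, w y = 0) :
    ∃ N : ℕ, 0 < N ∧ ∀ x, w x ≤ N * f x := by
  refine ⟨⌈(K : ℝ) * k⌉₊ + 1, Nat.succ_pos _, fun x => ?_⟩
  have hf0 : 0 ≤ f x :=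
    (mul_nonneg_iff_of_pos_left (Nat.cast_pos.2 hk)).1 (infDist_nonneg.trans (hf x))
  calc w x ≤ K * infDist x s := hw.le_mul_infDist hs hw0 x
    _ ≤ K * (k * f x) := by gcongr; exact hf x
    _ = (K * k) * f x := by ring
    _ ≤ (⌈(K : ℝ) * k⌉₊ + 1 : ℕ) * f x := by
      gcongr
      push_cast
      linarith [Nat.le_ceil ((K : ℝ) * k)]

section Semifield

variable {n : ℕ} {add mul : TR n → TR n → TR n}

@[simp] lemma evalTR_bot (x : EuclideanSpace ℝ (Fin n)) : evalTR (⊥ : TR n) x = ⊥ := rfl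

@[simp] lemma evalTR_coe (p : TRF n) (x : EuclideanSpace ℝ (Fin n)) :
    evalTR (p : TR n) x = p.1 x := rfl

lemma AddLaw.add_coe_coe (hadd : AddLaw n add) {p q r : TRF n}
    (hr : ∀ x, r.1 x = max (p.1 x) (q.1 x)) : add p q = r := by
  obtain ⟨h, hh, hx⟩ := hadd.1 p q
  rw [hh, WithBot.coe_inj]
  exact Subtype.ext (funext fun x => (hx x).trans (hr x).symm)

lemma MulLaw.mul_coe_coe (hmul : MulLaw n mul) {p q r : TRF n}
    (hr : ∀ x, r.1 x = p.1 x + q.1 x) : mul p q = r := by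
  obtain ⟨h, hh, hx⟩ := hmul.1 p q
  rw [hh, WithBot.coe_inj]
  exact Subtype.ext (funext fun x => (hx x).trans (hr x).symm)

lemma MulLaw.one_mul (hmul : MulLaw n mul) {one : TRF n} (hone : ∀ x, one.1 x = 0)
    (p : TRF n) : mul one p = p :=
  hmul.mul_coe_coe fun x => by rw [hone, zero_add]

lemma AddLaw.evalTR_add (hadd : AddLaw n add) (a b : TR n) (x : EuclideanSpace ℝ (Fin n)) :
    evalTR (add a b) x = max (evalTR a x) (evalTR b x) := by
  induction a using WithBot.recBotCoe with
  | bot => simp [hadd.2.2]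
  | coe p =>
    induction b using WithBot.recBotCoe with
    | bot => simp [hadd.2.1]
    | coe q =>
      obtain ⟨h, hh, hx⟩ := hadd.1 p q
      simp [hh, hx]

lemma MulLaw.evalTR_mul (hmul : MulLaw n mul) (a b : TR n) (x : EuclideanSpace ℝ (Fin n)) :
    evalTR (mul a b) x = evalTR a x + evalTR b x := by
  induction a using WithBot.recBotCoe with
  | bot => simp [hmul.2.2]
  | coe p =>
    induction b using WithBot.recBotCoe with
    | bot => simp [hmul.2.1]
    | coe q =>
      obtain ⟨h, hh, hx⟩ := hmul.1 p q
      simp [hh, hx]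

lemma isCongruence_eqOn_evalTR (hadd : AddLaw n add) (hmul : MulLaw n mul)
    (s : Set (EuclideanSpace ℝ (Fin n))) :
    IsCongruence add mul fun a b => ∀ x ∈ s, evalTR a x = evalTR b x :=
  ⟨fun _ _ _ => rfl, fun _ _ h x hx => (h x hx).symm,
    fun _ _ _ h h' x hx => (h x hx).trans (h' x hx),
    fun _ _ _ _ h h' x hx => by rw [hadd.evalTR_add, hadd.evalTR_add, h x hx, h' x hx],
    fun _ _ _ _ h h' x hx => by rw [hmul.evalTR_mul, hmul.evalTR_mul, h x hx, h' x hx]⟩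

namespace IsCongruence

variable {E : TR n → TR n → Prop} (hE : IsCongruence add mul E)
include hE

lemma refl (a : TR n) : E a a := hE.1 a

lemma symm {a b : TR n} (h : E a b) : E b a := hE.2.1 a b h

lemma trans {a b c : TR n} (h : E a b) (h' : E b c) : E a c := hE.2.2.1 a b c h h'

lemma add_congr {a b c d : TR n} (h : E a b) (h' : E c d) : E (add a c) (add b d) :=
  hE.2.2.2.1 a b c d h h'

lemma mul_congr {a b c d : TR n} (h : E a b) (h' : E c d) : E (mul a c) (mul b d) :=
  hE.2.2.2.2 a b c d h h'

variable (hadd : AddLaw n add) (hmul : MulLaw n mul) {one : TRF n} (hone : ∀ x, one.1 x = 0)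
  {f : TRF n} (hf : E f one)
include hmul hone hf

lemma exists_nsmul_rel_one (N : ℕ) : ∃ fN : TRF n, (∀ x, fN.1 x = N * f.1 x) ∧ E fN one := by
  induction N with
  | zero => exact ⟨one, fun x => by simp [hone], hE.refl _⟩
  | succ N ih =>
    obtain ⟨fN, hfN, hfN1⟩ := ih
    obtain ⟨g, hg, hgx⟩ := hmul.1 f fN
    refine ⟨g, fun x => by rw [hgx, hfN]; push_cast; ring, hE.trans ?_ hfN1⟩
    simpa only [hg, hmul.one_mul hone] using hE.mul_congr hf (hE.refl fN)

include hadd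

lemma rel_of_le_of_le_nsmul_add {p q : TRF n} (N : ℕ) (hpq : ∀ x, p.1 x ≤ q.1 x)
    (hqp : ∀ x, q.1 x ≤ N * f.1 x + p.1 x) : E p q := by
  obtain ⟨fN, hfN, hfN1⟩ := hE.exists_nsmul_rel_one hmul hone hf N
  obtain ⟨r, hr, hrx⟩ := hmul.1 fN p
  have hrp : E r p := by simpa only [hr, hmul.one_mul hone] using hE.mul_congr hfN1 (hE.refl p)
  have hrq : add r q = r := hadd.add_coe_coe fun x => by
    rw [hrx, hfN, eq_comm, max_eq_left (hqp x)]
  have hpq' : add p q = q := hadd.add_coe_coe fun x => (max_eq_right (hpq x)).symm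
  have hrq' : E r q := by simpa only [hrq, hpq'] using hE.add_congr hrp (hE.refl q)
  exact hE.trans (hE.symm hrp) hrq'

lemma rel_of_eqOn {s : Set (EuclideanSpace ℝ (Fin n))} (hs : s.Nonempty) {k : ℕ} (hk : 0 < k)
    (hdist : ∀ x, infDist x s ≤ k * f.1 x) {p q : TRF n}
    (hpq : ∀ x ∈ s, p.1 x = q.1 x) : E p q := by
  obtain ⟨m, -, hmx⟩ := hadd.1 p q
  have rel_max : ∀ p' : TRF n, (∀ x, p'.1 x ≤ m.1 x) → (∀ x ∈ s, m.1 x = p'.1 x) → E p' m := by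
    intro p' hle heq
    obtain ⟨Kp, hKp⟩ := p'.2.exists_lipschitzWith
    obtain ⟨Km, hKm⟩ := m.2.exists_lipschitzWith
    obtain ⟨N, -, hN⟩ := exists_nat_le_mul_of_infDist_le hs hk hdist (hKm.sub hKp)
      fun y hy => sub_eq_zero.2 (heq y hy)
    exact hE.rel_of_le_of_le_nsmul_add hadd hmul hone hf N hle fun x => by linarith [hN x]
  refine hE.trans (rel_max p ?_ ?_) (hE.symm (rel_max q ?_ ?_))
  · exact fun x => (hmx x).symm ▸ le_max_left _ _
  · exact fun x hx => by rw [hmx, hpq x hx, max_self]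
  · exact fun x => (hmx x).symm ▸ le_max_right _ _
  · exact fun x hx => by rw [hmx, hpq x hx, max_self]

lemma rel_of_forall_evalTR_eq {s : Set (EuclideanSpace ℝ (Fin n))} (hs : s.Nonempty) {k : ℕ}
    (hk : 0 < k) (hdist : ∀ x, infDist x s ≤ k * f.1 x) {a b : TR n}
    (hab : ∀ x ∈ s, evalTR a x = evalTR b x) : E a b := by
  obtain ⟨x₀, hx₀⟩ := hs
  induction a using WithBot.recBotCoe with
  | bot =>
    obtain rfl : b = ⊥ := WithBot.map_eq_bot_iff.1 (hab x₀ hx₀).symm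
    exact hE.refl ⊥
  | coe p =>
    induction b using WithBot.recBotCoe with
    | bot => exact absurd (hab x₀ hx₀) (by simp)
    | coe q =>
      refine hE.rel_of_eqOn hadd hmul hone hf ⟨x₀, hx₀⟩ hk hdist fun x hx => ?_
      simpa using hab x hx

end IsCongruence

end Semifield

/-- Suppose `f` is a tropical rational function whose zero set is
`closure V` (`V ⊆ ℝ^n` nonempty) and `k' * f x ≥ dist(x, closure V)` for all `x` and
some `k' > 0`.  Then (a) every tropical rational `g ≥ 0` vanishing on `closure V`
satisfies `g ≤ N' * f` for some `N' > 0`; and (b) the congruence `E(closure V)` of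
pairs agreeing on `closure V` equals the congruence generated by `(f, 0)` (where the
multiplicative identity `one` is the constant function `0`). -/
theorem stmt12 (n : ℕ) (add mul : TR n → TR n → TR n)
    (hadd : AddLaw n add) (hmul : MulLaw n mul)
    (one : TRF n) (hone : ∀ x, one.1 x = 0)
    (V : Set (EuclideanSpace ℝ (Fin n))) (hV : V.Nonempty)
    (f : TRF n)
    (h1 : {x | f.1 x = 0} = closure V)
    (h2 : ∃ k' : ℕ, 0 < k' ∧ ∀ x, Metric.infDist x (closure V) ≤ (k' : ℝ) * f.1 x) :
    (∀ g : EuclideanSpace ℝ (Fin n) → ℝ, IsTropRat n g → (∀ x, 0 ≤ g x) →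
        (∀ x ∈ closure V, g x = 0) →
        ∃ N' : ℕ, 0 < N' ∧ ∀ x, g x ≤ (N' : ℝ) * f.1 x) ∧
    ((fun a b => ∀ x ∈ closure V, evalTR a x = evalTR b x) =
        conGenBy add mul (fun a b => a = (f : TR n) ∧ b = (one : TR n))) := by
  obtain ⟨k', hk', hk⟩ := h2
  refine ⟨fun g hg _ hgV => ?_, ?_⟩
  · obtain ⟨K, hK⟩ := hg.exists_lipschitzWith
    exact exists_nat_le_mul_of_infDist_le hV.closure hk' hk hK hgV
  ext a b
  refine ⟨fun hab E hE hR => hE.rel_of_forall_evalTR_eq hadd hmul hone (hR _ _ ⟨rfl, rfl⟩)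
    hV.closure hk' hk hab, fun hab => hab _ (isCongruence_eqOn_evalTR hadd hmul _) ?_⟩
  rintro _ _ ⟨rfl, rfl⟩ x hx
  have hfx : f.1 x = 0 := (h1 ▸ hx : x ∈ {x | f.1 x = 0})
  simp [hfx, hone]
end
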